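/- With A = i(√5+1)/2, the polynomial f(z0, z1, -A z3, z3) in ℂ[z0,z1,z3] factors as the product (z0^2 + 2√2 z0 z1 + z1^2 + (3(√5+1)/2) z3^2)·(z0^2 - 2√2 z0 z1 + z1^2 + (3(√5+1)/2) z3^2). -/

import Mathlib

/-!
Write `φ = (1 + √5)/2`, so that `A = iφ` and `a = -A` satisfies `a² = -φ²`.
With `q = z0² + z1²`, `f(z0, z1, a z3, z3) = q² - 8 z0² z1² - 6(a² + 1) q z3² + (a⁴ - 6a² + 1) z3⁴`,
and `φ² = φ + 1` turns the last two coefficients into `6φ = 2·3φ` and `φ⁴ + 6φ² + 1 = 9φ²`.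
Hence the quartic is `(q + 3φ z3²)² - (2√2 z0 z1)²`, a difference of squares.
-/

open MvPolynomial

def mukaiQuartic {R : Type*} [CommRing R] (z₀ z₁ z₂ z₃ : R) : R :=
  z₀ ^ 4 + z₁ ^ 4 + z₂ ^ 4 + z₃ ^ 4
    - 6 * (z₀ ^ 2 * z₁ ^ 2 + z₀ ^ 2 * z₂ ^ 2 + z₀ ^ 2 * z₃ ^ 2
      + z₁ ^ 2 * z₂ ^ 2 + z₁ ^ 2 * z₃ ^ 2 + z₂ ^ 2 * z₃ ^ 2)

theorem mukaiQuartic_eq_mul {R : Type*} [CommRing R] {φ s a : R} (hφ : φ ^ 2 = φ + 1)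
    (hs : s ^ 2 = 2) (ha : a ^ 2 = -φ ^ 2) (x y z : R) :
    mukaiQuartic x y (a * z) z
      = (x ^ 2 + 2 * s * x * y + y ^ 2 + 3 * φ * z ^ 2)
        * (x ^ 2 - 2 * s * x * y + y ^ 2 + 3 * φ * z ^ 2) := by
  unfold mukaiQuartic
  linear_combination 4 * x ^ 2 * y ^ 2 * hs
    + (6 * (x ^ 2 + y ^ 2) * z ^ 2 + (φ ^ 2 + φ - 1) * z ^ 4) * hφ
    + ((a ^ 2 - φ ^ 2 - 6) * z ^ 4 - 6 * (x ^ 2 + y ^ 2) * z ^ 2) * ha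

-- `X 0`, `X 1`, `X 2` stand for `z0`, `z1`, `z3`.
/-- With `A = i(√5+1)/2`, the polynomial `f(z0,z1,-A z3,z3)` factors as
`(z0^2 + 2√2 z0 z1 + z1^2 + (3(√5+1)/2) z3^2)(z0^2 - 2√2 z0 z1 + z1^2 + (3(√5+1)/2) z3^2)`.
Variables: `X 0 = z0`, `X 1 = z1`, `X 2 = z3`. -/
theorem mukai_C3_factorization :
    ((X 0)^4 + (X 1)^4 + (C (-(Complex.I * ((Real.sqrt 5 : ℂ) + 1) / 2)) * X 2)^4 + (X 2)^4
        - 6 * ((X 0)^2*(X 1)^2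
            + (X 0)^2*(C (-(Complex.I * ((Real.sqrt 5 : ℂ) + 1) / 2)) * X 2)^2
            + (X 0)^2*(X 2)^2
            + (X 1)^2*(C (-(Complex.I * ((Real.sqrt 5 : ℂ) + 1) / 2)) * X 2)^2
            + (X 1)^2*(X 2)^2
            + (C (-(Complex.I * ((Real.sqrt 5 : ℂ) + 1) / 2)) * X 2)^2*(X 2)^2)
        : MvPolynomial (Fin 3) ℂ)
      = (X 0 ^ 2 + C (2 * (Real.sqrt 2 : ℂ)) * X 0 * X 1 + X 1 ^ 2
            + C (3 * ((Real.sqrt 5 : ℂ) + 1) / 2) * X 2 ^ 2)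
        * (X 0 ^ 2 - C (2 * (Real.sqrt 2 : ℂ)) * X 0 * X 1 + X 1 ^ 2
            + C (3 * ((Real.sqrt 5 : ℂ) + 1) / 2) * X 2 ^ 2) := by
  have h5 : (Real.sqrt 5 : ℂ) ^ 2 = 5 := by
    exact_mod_cast Real.sq_sqrt (by norm_num : (0 : ℝ) ≤ 5)
  have hs : (Real.sqrt 2 : ℂ) ^ 2 = 2 := by
    exact_mod_cast Real.sq_sqrt (by norm_num : (0 : ℝ) ≤ 2)
  have hφ : (((Real.sqrt 5 : ℂ) + 1) / 2) ^ 2 = ((Real.sqrt 5 : ℂ) + 1) / 2 + 1 := by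
    linear_combination h5 / 4
  have ha : (-(Complex.I * ((Real.sqrt 5 : ℂ) + 1) / 2)) ^ 2
      = -(((Real.sqrt 5 : ℂ) + 1) / 2) ^ 2 := by
    linear_combination (((Real.sqrt 5 : ℂ) + 1) / 2) ^ 2 * Complex.I_sq
  apply MvPolynomial.funext
  intro x
  have key := mukaiQuartic_eq_mul hφ hs ha (x 0) (x 1) (x 2)
  unfold mukaiQuartic at key
  simp only [map_add, map_sub, map_mul, map_pow, eval_X, eval_C, map_ofNat]
  linear_combination key
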